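/- For every irrational x ∈ (0,1), the denominators of the principal convergents of the odd-odd continued fraction of x are strictly increasing: q_0 = 1 and q_{n+1} > q_n ≥ 1 for every n ≥ 0. Consequently q_n → ∞ as n → ∞. -/

import Mathlib

/-- The odd-odd continued fraction map on `[0,1]`.  For `x ∈ [(k-1)/k, k/(k+1))` with `k ≥ 1`
one has `k = ⌊1/(1-x)⌋`, and the two branches are separated by `(2k-1)/(2k+1)`. -/
noncomputable def oocfT (x : ℝ) : ℝ :=
  if x = 1 then 1
  else if x < (2 * (⌊1 / (1 - x)⌋ : ℝ) - 1) / (2 * (⌊1 / (1 - x)⌋ : ℝ) + 1) then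
    ((⌊1 / (1 - x)⌋ : ℝ) * x - ((⌊1 / (1 - x)⌋ : ℝ) - 1)) /
      ((⌊1 / (1 - x)⌋ : ℝ) - ((⌊1 / (1 - x)⌋ : ℝ) + 1) * x)
  else
    ((⌊1 / (1 - x)⌋ : ℝ) - ((⌊1 / (1 - x)⌋ : ℝ) + 1) * x) /
      ((⌊1 / (1 - x)⌋ : ℝ) * x - ((⌊1 / (1 - x)⌋ : ℝ) - 1))

/-- OOCF partial quotient `a` of a point `y`: `a = k+1` if `y` is in the lower branch
interval `((k-1)/k, (2k-1)/(2k+1))`, and `a = k` if `y ∈ ((2k-1)/(2k+1), k/(k+1))`,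
where `k = ⌊1/(1-y)⌋`. -/
noncomputable def oocfA (y : ℝ) : ℤ :=
  if y < (2 * (⌊1 / (1 - y)⌋ : ℝ) - 1) / (2 * (⌊1 / (1 - y)⌋ : ℝ) + 1) then ⌊1 / (1 - y)⌋ + 1
  else ⌊1 / (1 - y)⌋

/-- OOCF partial quotient `ε` of a point `y`: `ε = -1` on the lower branch interval and
`ε = 1` on the upper one. -/
noncomputable def oocfE (y : ℝ) : ℤ :=
  if y < (2 * (⌊1 / (1 - y)⌋ : ℝ) - 1) / (2 * (⌊1 / (1 - y)⌋ : ℝ) + 1) then -1 else 1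

/-- The OOCF convergents `(p'_n, q'_n, p_n, q_n)` of `x`, defined by
`p'_0 = 1, q'_0 = 0, p_0 = 1, q_0 = 1` and
`p'_n = a_n p_{n-1} - p'_{n-1}`, `q'_n = a_n q_{n-1} - q'_{n-1}`,
`p_n = 2 p'_n + ε_n p_{n-1}`, `q_n = 2 q'_n + ε_n q_{n-1}`,
where `(a_n, ε_n)` are the partial quotients of `x`, i.e. `a_n = oocfA (oocfT^[n-1] x)`,
`ε_n = oocfE (oocfT^[n-1] x)`. -/
noncomputable def oocfConv (x : ℝ) : ℕ → ℤ × ℤ × ℤ × ℤ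
  | 0 => (1, 0, 1, 1)
  | n + 1 =>
    let c := oocfConv x n
    (oocfA (oocfT^[n] x) * c.2.2.1 - c.1,
     oocfA (oocfT^[n] x) * c.2.2.2 - c.2.1,
     2 * (oocfA (oocfT^[n] x) * c.2.2.1 - c.1) + oocfE (oocfT^[n] x) * c.2.2.1,
     2 * (oocfA (oocfT^[n] x) * c.2.2.2 - c.2.1) + oocfE (oocfT^[n] x) * c.2.2.2)

/-- `n`-th sub-convergent numerator `p'_n`. -/
noncomputable def oocfP' (x : ℝ) (n : ℕ) : ℤ := (oocfConv x n).1

/-- `n`-th sub-convergent denominator `q'_n`. -/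
noncomputable def oocfQ' (x : ℝ) (n : ℕ) : ℤ := (oocfConv x n).2.1

/-- `n`-th principal convergent numerator `p_n`. -/
noncomputable def oocfP (x : ℝ) (n : ℕ) : ℤ := (oocfConv x n).2.2.1

/-- `n`-th principal convergent denominator `q_n`. -/
noncomputable def oocfQ (x : ℝ) (n : ℕ) : ℤ := (oocfConv x n).2.2.2

/-- `n`-th pseudo-convergent numerator: `p''_n = p'_n + ε_n p_{n-1}` for `n ≥ 1`
(with the convention `p''_0 = 0`). -/
noncomputable def oocfP'' (x : ℝ) : ℕ → ℤ
  | 0 => 0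
  | n + 1 => oocfP' x (n + 1) + oocfE (oocfT^[n] x) * oocfP x n

/-- `n`-th pseudo-convergent denominator: `q''_n = q'_n + ε_n q_{n-1}` for `n ≥ 1`
(with the convention `q''_0 = 1`). -/
noncomputable def oocfQ'' (x : ℝ) : ℕ → ℤ
  | 0 => 1
  | n + 1 => oocfQ' x (n + 1) + oocfE (oocfT^[n] x) * oocfQ x n

/-! The map `oocfT` sends irrationals of `(0,1)` to irrationals of `(0,1)`, each branch being a
unimodular Möbius transformation, and along the way the digits satisfy `a ≥ 1`, with `a ≥ 2`
when `ε = -1`.  For such digits the recursion preserves `0 ≤ q'_n < q_n` and forces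
`q_{n+1} > q_n`: if `ε = 1` then `q_{n+1} = q_n + 2 q'_{n+1}` with `q'_{n+1} ≥ q_n - q'_n > 0`,
and if `ε = -1` then `q'_{n+1} ≥ 2 q_n - q'_n > q_n` and `q_{n+1} = 2 q'_{n+1} - q_n > q'_{n+1}`. -/

open Set Filter

theorem Irrational.intCast_mul_add_div_mul_add {y : ℝ} (hy : Irrational y) {a b c d : ℤ}
    (hdet : a * d - b * c ≠ 0) : Irrational ((a * y + b) / (c * y + d)) := by
  rcases eq_or_ne c 0 with rfl | hc
  · have ha : a ≠ 0 := by rintro rfl; simp at hdet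
    have hd : d ≠ 0 := by rintro rfl; simp at hdet
    simpa using ((hy.intCast_mul ha).add_intCast b).div_intCast hd
  · have hlin : Irrational (c * (c * y + d)) := by
      have := (hy.intCast_mul (mul_ne_zero hc hc)).add_intCast (c * d)
      push_cast at this
      convert this using 1
      ring
    have hc' : (c : ℝ) ≠ 0 := by exact_mod_cast hc
    have hden : (c : ℝ) * y + d ≠ 0 := right_ne_zero_of_mul hlin.ne_zero
    have hsplit : (a * y + b) / (c * y + d) =
        ((a / c : ℚ) : ℝ) - ((a * d - b * c : ℤ) : ℝ) / (c * (c * y + d)) := by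
      rw [Rat.cast_div, Rat.cast_intCast, Rat.cast_intCast, div_sub_div _ _ hc' hlin.ne_zero,
        div_eq_div_iff hden (mul_ne_zero hc' hlin.ne_zero)]
      push_cast
      ring
    rw [hsplit]
    exact (hlin.intCast_div hdet).ratCast_sub _

theorem Int.tendsto_atTop_of_lt_succ {f : ℕ → ℤ} (hf : ∀ n, f n < f (n + 1)) :
    Tendsto f atTop atTop := by
  have hgrowth : ∀ n : ℕ, f 0 + n ≤ f n := by
    intro n
    induction n with
    | zero => simp
    | succ n ih => have := hf n; push_cast; omega
  exact tendsto_atTop_mono hgrowth (tendsto_atTop_add_const_left _ _ tendsto_natCast_atTop_atTop)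

noncomputable def oocfK (y : ℝ) : ℤ := ⌊1 / (1 - y)⌋

section Map

variable {y : ℝ}

theorem one_le_oocfK (hy : y ∈ Ioo (0 : ℝ) 1) : 1 ≤ oocfK y := by
  have h1y : 0 < 1 - y := by linarith [hy.2]
  rw [oocfK, Int.le_floor, le_div_iff₀ h1y]
  push_cast
  linarith [hy.1]

theorem oocfK_sub_mul_pos (hy : y < 1) : 0 < (oocfK y : ℝ) - (oocfK y + 1) * y := by
  have h1y : 0 < 1 - y := by linarith
  have := (div_lt_iff₀ h1y).1 (Int.lt_floor_add_one (1 / (1 - y)))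
  rw [oocfK]
  linarith

theorem oocfK_mul_sub_pos (hy : y ∈ Ioo (0 : ℝ) 1) (hirr : Irrational y) :
    0 < (oocfK y : ℝ) * y - (oocfK y - 1) := by
  have h1y : 0 < 1 - y := by linarith [hy.2]
  have hle : (oocfK y : ℝ) * (1 - y) ≤ 1 := (le_div_iff₀ h1y).1 (Int.floor_le _)
  have hne : (oocfK y : ℝ) * y - (oocfK y - 1) ≠ 0 := by
    have hk0 : oocfK y ≠ 0 := (zero_lt_one.trans_le (one_le_oocfK hy)).ne'
    have := (hirr.intCast_mul hk0).sub_intCast (oocfK y - 1)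
    push_cast at this
    exact this.ne_zero
  exact lt_of_le_of_ne (by linarith) hne.symm

theorem oocfT_of_lt (hy : y ≠ 1)
    (h : y < (2 * (oocfK y : ℝ) - 1) / (2 * (oocfK y : ℝ) + 1)) :
    oocfT y = ((oocfK y : ℝ) * y - (oocfK y - 1)) / (oocfK y - (oocfK y + 1) * y) := by
  rw [oocfT, if_neg hy]
  exact if_pos h

theorem oocfT_of_not_lt (hy : y ≠ 1)
    (h : ¬y < (2 * (oocfK y : ℝ) - 1) / (2 * (oocfK y : ℝ) + 1)) :
    oocfT y = ((oocfK y : ℝ) - (oocfK y + 1) * y) / (oocfK y * y - (oocfK y - 1)) := by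
  rw [oocfT, if_neg hy]
  exact if_neg h

theorem oocfT_mapsTo :
    MapsTo oocfT (Ioo 0 1 ∩ {y | Irrational y}) (Ioo 0 1 ∩ {y | Irrational y}) := by
  rintro y ⟨hy, hirr : Irrational y⟩
  have hnum := oocfK_mul_sub_pos hy hirr
  have hden := oocfK_sub_mul_pos hy.2
  set k := oocfK y
  -- the lower branch has determinant `k * k - (1 - k) * (-(k + 1)) = 1`
  have hirr' : Irrational (((k : ℝ) * y - (k - 1)) / (k - (k + 1) * y)) := by
    have := hirr.intCast_mul_add_div_mul_add (a := k) (b := 1 - k) (c := -(k + 1)) (d := k)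
      (by ring_nf; decide)
    convert this using 2 <;> push_cast <;> ring
  have h2k : (0 : ℝ) < 2 * k + 1 := by linarith [(by exact_mod_cast one_le_oocfK hy : (1 : ℝ) ≤ k)]
  by_cases hc : y < (2 * (k : ℝ) - 1) / (2 * k + 1)
  · rw [oocfT_of_lt hy.2.ne hc]
    have := (lt_div_iff₀ h2k).1 hc
    exact ⟨⟨div_pos hnum hden, (div_lt_one hden).2 (by linarith)⟩, hirr'⟩
  · rw [oocfT_of_not_lt hy.2.ne hc]
    have hc' : (2 * (k : ℝ) - 1) / (2 * k + 1) < y := by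
      refine lt_of_le_of_ne (not_lt.1 hc) ?_
      simpa using (hirr.ne_rational (2 * k - 1) (2 * k + 1)).symm
    have := (div_lt_iff₀ h2k).1 hc'
    refine ⟨⟨div_pos hden hnum, (div_lt_one hnum).2 (by linarith)⟩, ?_⟩
    rw [mem_ofPred_eq, ← inv_div]
    exact hirr'.inv

theorem oocf_digits_admissible (hy : y ∈ Ioo (0 : ℝ) 1) :
    oocfE y = 1 ∧ 1 ≤ oocfA y ∨ oocfE y = -1 ∧ 2 ≤ oocfA y := by
  have hk := one_le_oocfK hy
  rw [oocfK] at hk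
  unfold oocfA oocfE
  split_ifs
  · exact Or.inr ⟨rfl, by omega⟩
  · exact Or.inl ⟨rfl, hk⟩

end Map

theorem oocf_denominator_step {q' q a e : ℤ} (h0 : 0 ≤ q') (hlt : q' < q)
    (hae : e = 1 ∧ 1 ≤ a ∨ e = -1 ∧ 2 ≤ a) :
    0 ≤ a * q - q' ∧ a * q - q' < 2 * (a * q - q') + e * q ∧ q < 2 * (a * q - q') + e * q := by
  rcases hae with ⟨rfl, ha⟩ | ⟨rfl, ha⟩ <;> refine ⟨?_, ?_, ?_⟩ <;> nlinarith

section Convergents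

variable {x : ℝ}

theorem oocfQ'_succ (n : ℕ) :
    oocfQ' x (n + 1) = oocfA (oocfT^[n] x) * oocfQ x n - oocfQ' x n := rfl

theorem oocfQ_succ (n : ℕ) :
    oocfQ x (n + 1) = 2 * oocfQ' x (n + 1) + oocfE (oocfT^[n] x) * oocfQ x n := rfl

theorem oocf_digits_admissible_iterate (hx : x ∈ Ioo (0 : ℝ) 1) (hirr : Irrational x) (n : ℕ) :
    oocfE (oocfT^[n] x) = 1 ∧ 1 ≤ oocfA (oocfT^[n] x) ∨
      oocfE (oocfT^[n] x) = -1 ∧ 2 ≤ oocfA (oocfT^[n] x) :=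
  oocf_digits_admissible (oocfT_mapsTo.iterate n ⟨hx, hirr⟩).1

theorem oocfQ'_nonneg_and_lt_oocfQ (hx : x ∈ Ioo (0 : ℝ) 1) (hirr : Irrational x) (n : ℕ) :
    0 ≤ oocfQ' x n ∧ oocfQ' x n < oocfQ x n := by
  induction n with
  | zero => exact ⟨le_rfl, zero_lt_one⟩
  | succ n ih =>
    obtain ⟨h0, hlt, -⟩ :=
      oocf_denominator_step ih.1 ih.2 (oocf_digits_admissible_iterate hx hirr n)
    rw [oocfQ_succ, oocfQ'_succ]
    exact ⟨h0, hlt⟩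

theorem oocfQ_lt_oocfQ_succ (hx : x ∈ Ioo (0 : ℝ) 1) (hirr : Irrational x) (n : ℕ) :
    oocfQ x n < oocfQ x (n + 1) := by
  obtain ⟨h0, hlt⟩ := oocfQ'_nonneg_and_lt_oocfQ hx hirr n
  rw [oocfQ_succ, oocfQ'_succ]
  exact (oocf_denominator_step h0 hlt (oocf_digits_admissible_iterate hx hirr n)).2.2

end Convergents

/-- For irrational `x ∈ (0,1)`, the denominators of the OOCF principal convergents
satisfy `q_0 = 1`, `1 ≤ q_n < q_{n+1}` for all `n`, and `q_n → ∞`. -/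
theorem oocf_denominators_strict_mono
    (x : ℝ) (hx : x ∈ Set.Ioo (0 : ℝ) 1) (hirr : Irrational x) :
    oocfQ x 0 = 1 ∧ (∀ n : ℕ, 1 ≤ oocfQ x n ∧ oocfQ x n < oocfQ x (n + 1)) ∧
      Filter.Tendsto (fun n => oocfQ x n) Filter.atTop Filter.atTop := by
  have hmono := oocfQ_lt_oocfQ_succ hx hirr
  have hpos : ∀ n, 1 ≤ oocfQ x n := fun n =>
    ((strictMono_nat_of_lt_succ hmono).monotone (Nat.zero_le n) : oocfQ x 0 ≤ oocfQ x n)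
  exact ⟨rfl, fun n => ⟨hpos n, hmono n⟩, Int.tendsto_atTop_of_lt_succ hmono⟩
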